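/- arXiv:1202.3013 — 2 statements merged into one kernel-verified Lean document; each statement's English description precedes it below -/
import Mathlib

section
/- Let S be a semigroup and let S¹ denote the monoid obtained from S by adjoining a new identity element. Then: (1) S is Markov as a semigroup if and only if S¹ is Markov as a semigroup; (2) S is robustly Markov with respect to some alphabet if and only if S¹ is robustly Markov with respect to some alphabet; (3) S is strongly Markov if and only if S¹ is strongly Markov. -/
open Function

/-- A language is regular if it is accepted by a deterministic finite automaton
with a finite state set. -/
def RegularLang {A : Type} (L : Language A) : Prop :=
  ∃ (Q : Type) (_ : Fintype Q) (M : DFA A Q), M.accepts = L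

/-- The product of a nonempty word under the letter-assignment `φ`; the empty
word is sent to `none`. This is the induced map `φ⁺` on nonempty words. -/
def prodPlus {A S : Type} [Semigroup S] (φ : A → S) : List A → Option S
  | [] => none
  | a :: w => some (w.foldl (fun s b => s * φ b) (φ a))

/-- The induced monoid homomorphism `φ*` from the free monoid of words. -/
def monProd {A M : Type} [Monoid M] (φ : A → M) (w : List A) : M :=
  (w.map φ).prod

/-- A semigroup Markov language for `S` over `A` (with respect to `φ`): a regular,
`+`-prefix-closed language of nonempty words mapping bijectively onto `S` under `φ⁺`. -/
structure IsSgMarkovLang {A S : Type} [Semigroup S] (φ : A → S) (L : Language A) : Prop where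
  regular : RegularLang L
  not_empty_mem : [] ∉ L
  plus_prefix_closed : ∀ u v : List A, u ≠ [] → v ≠ [] → u ++ v ∈ L → u ∈ L
  unique_rep : ∀ s : S, ∃! w : List A, w ∈ L ∧ prodPlus φ w = some s

/-- A robust semigroup Markov language: additionally every word of `L` has minimal
length among (nonempty) words representing the same element. -/
structure IsRobustSgMarkovLang {A S : Type} [Semigroup S] (φ : A → S) (L : Language A)
    extends IsSgMarkovLang φ L : Prop where
  min_length : ∀ w ∈ L, ∀ v : List A, prodPlus φ v = prodPlus φ w → w.length ≤ v.length

/-- A monoid Markov language for `M` over `A` (with respect to `φ`): a regular,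
prefix-closed language mapping bijectively onto `M` under `φ*`. -/
structure IsMonMarkovLang {A M : Type} [Monoid M] (φ : A → M) (L : Language A) : Prop where
  regular : RegularLang L
  prefix_closed : ∀ u v : List A, u ++ v ∈ L → u ∈ L
  unique_rep : ∀ m : M, ∃! w : List A, w ∈ L ∧ monProd φ w = m

/-- A robust monoid Markov language: additionally every word of `L` has minimal
length among words representing the same element. -/
structure IsRobustMonMarkovLang {A M : Type} [Monoid M] (φ : A → M) (L : Language A)
    extends IsMonMarkovLang φ L : Prop where
  min_length : ∀ w ∈ L, ∀ v : List A, monProd φ v = monProd φ w → w.length ≤ v.length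

/-- `S` is Markov as a semigroup. -/
def SgMarkov (S : Type) [Semigroup S] : Prop :=
  ∃ (A : Type) (_ : Fintype A) (φ : A → S),
    (∀ s : S, ∃ w : List A, prodPlus φ w = some s) ∧
    ∃ L : Language A, IsSgMarkovLang φ L

/-- `S` is robustly Markov (as a semigroup) with respect to some alphabet. -/
def SgRobustlyMarkov (S : Type) [Semigroup S] : Prop :=
  ∃ (A : Type) (_ : Fintype A) (φ : A → S),
    (∀ s : S, ∃ w : List A, prodPlus φ w = some s) ∧
    ∃ L : Language A, IsRobustSgMarkovLang φ L

/-- `S` is strongly Markov (as a semigroup). -/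
def SgStronglyMarkov (S : Type) [Semigroup S] : Prop :=
  ∀ (A : Type) [Fintype A] (φ : A → S),
    (∀ s : S, ∃ w : List A, prodPlus φ w = some s) →
    ∃ L : Language A, IsRobustSgMarkovLang φ L

/-- `M` is Markov as a monoid. -/
def MonMarkov (M : Type) [Monoid M] : Prop :=
  ∃ (A : Type) (_ : Fintype A) (φ : A → M),
    Surjective (monProd φ) ∧ ∃ L : Language A, IsMonMarkovLang φ L

/-- `M` is robustly Markov (as a monoid) with respect to some alphabet. -/
def MonRobustlyMarkov (M : Type) [Monoid M] : Prop :=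
  ∃ (A : Type) (_ : Fintype A) (φ : A → M),
    Surjective (monProd φ) ∧ ∃ L : Language A, IsRobustMonMarkovLang φ L

/-- `M` is strongly Markov (as a monoid). -/
def MonStronglyMarkov (M : Type) [Monoid M] : Prop :=
  ∀ (A : Type) [Fintype A] (φ : A → M),
    Surjective (monProd φ) →
    ∃ L : Language A, IsRobustMonMarkovLang φ L

/-!
A letter of an alphabet for `S¹` maps either to `1` or to an element of `S`, and since `S` is
closed under multiplication a nonempty word represents `1` exactly when all of its letters do.
So erasing the letters that map to `1` turns words for `S¹` into words for `S` representing the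
same element of `S`, never lengthens them, and (being a letter-to-letter-or-empty morphism)
preserves regularity and `+`-prefix-closedness; the image of a (robust) Markov language for `S¹`
is a (robust) Markov language for `S`. Conversely, a (robust) Markov language for `S` over `A`,
together with the one-letter word on a letter for `1`, is a (robust) Markov language for `S¹`.
Every generating alphabet of `S¹` has such a letter, which transfers strong Markovness too.
-/

namespace Language

variable {α β : Type*} {L : Language α}

theorem isRegular_of_finite (hL : (L : Set (List α)).Finite) : L.IsRegular := by
  rw [isRegular_iff_finite_range_leftQuotient]
  have hsuffixes : (⋃ w ∈ L, {y | y <:+ w}).Finite :=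
    hL.biUnion fun w _ => by simpa only [← List.mem_tails] using w.tails.finite_toSet
  refine hsuffixes.finite_subsets.subset ?_
  rintro _ ⟨x, rfl⟩ y hy
  exact Set.mem_biUnion hy (List.suffix_append x y)

/-- A left quotient of the image is determined by the set of left quotients of `L` at the words
mapping to the prefix, because `filterMap` splits along any factorisation of its output. -/
theorem IsRegular.filterMap (hL : L.IsRegular) (g : α → Option β) :
    IsRegular ({y | ∃ u ∈ L, u.filterMap g = y} : Language β) := by
  rw [isRegular_iff_finite_range_leftQuotient] at hL
  refine isRegular_iff_finite_range_leftQuotient.mpr ?_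
  let F : Set (Language α) → Language β := fun T =>
    {y | ∃ K ∈ T, ∃ u ∈ K, u.filterMap g = y}
  refine (hL.finite_subsets.image F).subset ?_
  rintro _ ⟨x, rfl⟩
  refine ⟨{K | ∃ u₁, u₁.filterMap g = x ∧ L.leftQuotient u₁ = K}, ?_, ?_⟩
  · rintro _ ⟨u₁, -, rfl⟩
    exact ⟨u₁, rfl⟩
  · ext y
    constructor
    · rintro ⟨_, ⟨u₁, rfl, rfl⟩, u₂, hu, rfl⟩
      exact ⟨u₁ ++ u₂, hu, List.filterMap_append⟩
    · rintro ⟨u, hu, hxy⟩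
      obtain ⟨u₁, u₂, rfl, rfl, rfl⟩ := List.filterMap_eq_append_iff.mp hxy
      exact ⟨_, ⟨u₁, rfl, rfl⟩, u₂, hu, rfl⟩

end Language

section Products

variable {A S M : Type} [Semigroup S] [Monoid M]

theorem prodPlus_eq_none_iff (φ : A → S) {w : List A} : prodPlus φ w = none ↔ w = [] := by
  cases w <;> simp [prodPlus]

theorem ne_nil_of_prodPlus_eq_some {φ : A → S} {w : List A} {s : S}
    (h : prodPlus φ w = some s) : w ≠ [] :=
  (prodPlus_eq_none_iff φ).not.mp (by simp [h])

theorem exists_prodPlus_eq_some (φ : A → S) {w : List A} (hw : w ≠ []) :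
    ∃ s, prodPlus φ w = some s :=
  Option.ne_none_iff_exists'.mp ((prodPlus_eq_none_iff φ).not.mpr hw)

theorem prodPlus_map {B : Type} (φ : B → S) (ι : A → B) (v : List A) :
    prodPlus φ (v.map ι) = prodPlus (φ ∘ ι) v := by
  cases v <;> simp [prodPlus, List.foldl_map]

theorem prodPlus_eq_some_monProd (χ : A → M) {w : List A} (hw : w ≠ []) :
    prodPlus χ w = some (monProd χ w) := by
  obtain ⟨a, t, rfl⟩ := List.exists_cons_of_ne_nil hw
  suffices ∀ x : M, t.foldl (fun s b => s * χ b) x = x * monProd χ t by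
    simp [prodPlus, this, monProd]
  induction t with
  | nil => simp [monProd]
  | cons b t ih => simp [ih, monProd, mul_assoc]

theorem prodPlus_coe (φ : A → S) (v : List A) :
    prodPlus (fun a => (φ a : WithOne S)) v = (prodPlus φ v).map (↑) := by
  obtain _ | ⟨a, t⟩ := v
  · rfl
  suffices ∀ s : S,
      t.foldl (fun x b => x * (φ b : WithOne S)) s = ↑(t.foldl (fun x b => x * φ b) s) by
    simp [prodPlus, this]
  induction t with
  | nil => simp
  | cons b t ih => simp [← ih]

theorem monProd_coe (φ : A → S) (v : List A) :
    monProd (fun a => (φ a : WithOne S)) v = (prodPlus φ v).elim 1 (↑) := by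
  obtain rfl | hv := eq_or_ne v []
  · rfl
  have := prodPlus_coe φ v
  rw [prodPlus_eq_some_monProd _ hv] at this
  obtain ⟨s, hs⟩ := exists_prodPlus_eq_some φ hv
  simp_all

theorem eq_one_of_prodPlus_eq_some_one {ψ : A → WithOne S} {a : A} {w : List A}
    (h : prodPlus ψ (a :: w) = some 1) : ψ a = 1 := by
  rw [prodPlus_eq_some_monProd ψ (List.cons_ne_nil a w), Option.some_inj] at h
  simp only [monProd, List.map_cons, List.prod_cons] at h
  generalize ψ a = x, (w.map ψ).prod = y at h ⊢
  induction x using WithOne.recOneCoe with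
  | one => rfl
  | coe s =>
    induction y using WithOne.recOneCoe <;> exact absurd h WithOne.coe_ne_one

end Products

section MarkovLanguages

variable {A S : Type} [Semigroup S] {φ : A → S} {L : Language A}

theorem IsSgMarkovLang.ne_nil (hL : IsSgMarkovLang φ L) {w : List A} (hw : w ∈ L) : w ≠ [] :=
  fun h => hL.not_empty_mem (h ▸ hw)

theorem IsSgMarkovLang.injOn (hL : IsSgMarkovLang φ L) : Set.InjOn (prodPlus φ) L := by
  intro w₁ h₁ w₂ h₂ heq
  obtain ⟨s, hs⟩ := exists_prodPlus_eq_some φ (hL.ne_nil h₁)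
  exact (hL.unique_rep s).unique ⟨h₁, hs⟩ ⟨h₂, heq ▸ hs⟩

theorem IsSgMarkovLang.of_injOn (hreg : L.IsRegular) (hnil : [] ∉ L)
    (hprefix : ∀ u v : List A, u ≠ [] → v ≠ [] → u ++ v ∈ L → u ∈ L)
    (hsurj : ∀ s, ∃ w ∈ L, prodPlus φ w = some s) (hinj : Set.InjOn (prodPlus φ) L) :
    IsSgMarkovLang φ L where
  regular := hreg
  not_empty_mem := hnil
  plus_prefix_closed := hprefix
  unique_rep s :=
    let ⟨w, hw, hws⟩ := hsurj s
    ⟨w, ⟨hw, hws⟩, fun _ ⟨hv, hvs⟩ => hinj hv hw (hvs.trans hws.symm)⟩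

end MarkovLanguages

section Erasure

variable {S B C : Type}

structure ExtendsByOne (ψ : B → WithOne S) (ι : C → B) (φ : C → S) : Prop where
  injective : Injective ι
  apply_embedding : ∀ c, ψ (ι c) = φ c
  eq_one_of_notMem_range : ∀ b ∉ Set.range ι, ψ b = 1

theorem extendsByOne_optionElim {A : Type} (φ : A → S) :
    ExtendsByOne (fun o : Option A => o.elim 1 fun a => ↑(φ a)) some φ where
  injective := Option.some_injective A
  apply_embedding _ := rfl
  eq_one_of_notMem_range
    | none, _ => rfl
    | some a, h => absurd ⟨a, rfl⟩ h

theorem extendsByOne_subtypeVal (ψ : B → WithOne S) :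
    ExtendsByOne ψ (Subtype.val : {b // ψ b ≠ 1} → B) fun b => WithOne.unone b.2 where
  injective := Subtype.val_injective
  apply_embedding b := (WithOne.coe_unone b.2).symm
  eq_one_of_notMem_range b hb := by_contra fun hb₁ => hb ⟨⟨b, hb₁⟩, rfl⟩

noncomputable def eraseLang (ι : C → B) (L : Language B) : Language C :=
  {v | v ≠ [] ∧ ∃ w ∈ L, w.filterMap (partialInv ι) = v}

def extendLang (ι : C → B) (b₀ : B) (L : Language C) : Language B :=
  {w | (∃ v ∈ L, v.map ι = w) ∨ w = [b₀]}

theorem isRegular_eraseLang (ι : C → B) {L : Language B} (hL : L.IsRegular) :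
    (eraseLang ι L).IsRegular := by
  have hnil : Language.IsRegular ({[]} : Language C) :=
    Language.isRegular_of_finite (Set.finite_singleton [])
  convert (hL.filterMap (partialInv ι)).inf hnil.compl using 1
  ext v
  exact and_comm

theorem isRegular_extendLang (ι : C → B) (b₀ : B) {L : Language C} (hL : L.IsRegular) :
    (extendLang ι b₀ L).IsRegular := by
  convert (hL.filterMap (some ∘ ι)).add
    (Language.isRegular_of_finite (Set.finite_singleton [b₀])) using 1
  ext v
  simp only [List.filterMap_eq_map]
  rfl

namespace ExtendsByOne

variable [Semigroup S] {ψ : B → WithOne S} {ι : C → B} {φ : C → S}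

theorem monProd_eq (h : ExtendsByOne ψ ι φ) (w : List B) :
    monProd ψ w = monProd (fun c => (φ c : WithOne S)) (w.filterMap (partialInv ι)) := by
  induction w with
  | nil => rfl
  | cons b w ih =>
    simp only [monProd, List.map_cons, List.prod_cons, List.filterMap_cons] at ih ⊢
    cases hb : partialInv ι b with
    | none =>
      have : b ∉ Set.range ι := by
        rintro ⟨c, rfl⟩
        simp [partialInv_left h.injective] at hb
      simp [h.eq_one_of_notMem_range b this, ih]
    | some c =>
      obtain rfl := (h.injective.isPartialInv c b).mp hb
      simp [h.apply_embedding, ih]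

theorem prodPlus_eq (h : ExtendsByOne ψ ι φ) {w : List B} (hw : w ≠ []) :
    prodPlus ψ w = some ((prodPlus φ (w.filterMap (partialInv ι))).elim 1 (↑)) := by
  rw [prodPlus_eq_some_monProd ψ hw, h.monProd_eq, monProd_coe]

theorem prodPlus_eq_some_coe_iff (h : ExtendsByOne ψ ι φ) {w : List B} (hw : w ≠ [])
    {s : S} :
    prodPlus ψ w = some ↑s ↔ prodPlus φ (w.filterMap (partialInv ι)) = some s := by
  rw [h.prodPlus_eq hw]
  cases prodPlus φ (w.filterMap (partialInv ι)) <;> simp [WithOne.one_ne_coe]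

theorem prodPlus_map (h : ExtendsByOne ψ ι φ) (v : List C) :
    prodPlus ψ (v.map ι) = (prodPlus φ v).map (↑) := by
  rw [_root_.prodPlus_map, ← prodPlus_coe]
  exact congrArg (prodPlus · v) (funext h.apply_embedding)

theorem isSgMarkovLang_eraseLang (h : ExtendsByOne ψ ι φ) {L : Language B}
    (hL : IsSgMarkovLang ψ L) : IsSgMarkovLang φ (eraseLang ι L) := by
  refine .of_injOn (isRegular_eraseLang ι hL.regular) (fun hnil => hnil.1 rfl) ?_ ?_ ?_
  · rintro u v hu hv ⟨-, w, hw, huv⟩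
    obtain ⟨w₁, w₂, rfl, rfl, rfl⟩ := List.filterMap_eq_append_iff.mp huv
    have hw₁ : w₁ ≠ [] := by rintro rfl; exact hu rfl
    have hw₂ : w₂ ≠ [] := by rintro rfl; exact hv rfl
    exact ⟨hu, w₁, hL.plus_prefix_closed w₁ w₂ hw₁ hw₂ hw, rfl⟩
  · intro s
    obtain ⟨w, ⟨hw, hws⟩, -⟩ := hL.unique_rep s
    have hs := (h.prodPlus_eq_some_coe_iff (hL.ne_nil hw)).mp hws
    exact ⟨_, ⟨ne_nil_of_prodPlus_eq_some hs, w, hw, rfl⟩, hs⟩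
  · rintro _ ⟨hv₁, w₁, hw₁, rfl⟩ _ ⟨-, w₂, hw₂, rfl⟩ heq
    obtain ⟨s, hs⟩ := exists_prodPlus_eq_some φ hv₁
    have hws₁ := (h.prodPlus_eq_some_coe_iff (hL.ne_nil hw₁)).mpr hs
    have hws₂ := (h.prodPlus_eq_some_coe_iff (hL.ne_nil hw₂)).mpr (heq ▸ hs)
    rw [hL.injOn hw₁ hw₂ (hws₁.trans hws₂.symm)]

theorem isRobustSgMarkovLang_eraseLang (h : ExtendsByOne ψ ι φ) {L : Language B}
    (hL : IsRobustSgMarkovLang ψ L) : IsRobustSgMarkovLang φ (eraseLang ι L) where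
  toIsSgMarkovLang := h.isSgMarkovLang_eraseLang hL.toIsSgMarkovLang
  min_length := by
    rintro _ ⟨hv, w, hw, rfl⟩ u hu
    obtain ⟨s, hs⟩ := exists_prodPlus_eq_some φ hv
    have hwu : prodPlus ψ (u.map ι) = prodPlus ψ w := by
      rw [h.prodPlus_map, hu, hs, (h.prodPlus_eq_some_coe_iff (hL.ne_nil hw)).mpr hs]
      rfl
    calc (w.filterMap (partialInv ι)).length ≤ w.length := List.length_filterMap_le _ _
      _ ≤ (u.map ι).length := hL.min_length w hw _ hwu
      _ = u.length := List.length_map _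

theorem isSgMarkovLang_extendLang (h : ExtendsByOne ψ ι φ) (b₀ : B) (hb₀ : ψ b₀ = 1)
    {L : Language C} (hL : IsSgMarkovLang φ L) : IsSgMarkovLang ψ (extendLang ι b₀ L) := by
  have prodPlus_map_ne {v : List C} (hv : v ∈ L) :
      prodPlus ψ (v.map ι) ≠ prodPlus ψ [b₀] := by
    obtain ⟨s, hs⟩ := exists_prodPlus_eq_some φ (hL.ne_nil hv)
    rw [h.prodPlus_map, hs]
    simp [prodPlus, hb₀]
  refine .of_injOn (isRegular_extendLang ι b₀ hL.regular) ?_ ?_ ?_ ?_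
  · rintro (⟨v, hv, hnil⟩ | hnil)
    · exact hL.ne_nil hv (List.map_eq_nil_iff.mp hnil)
    · exact List.cons_ne_nil b₀ [] hnil.symm
  · rintro u v hu hv (⟨w, hw, huv⟩ | huv)
    · obtain ⟨w₁, w₂, rfl, rfl, rfl⟩ := List.map_eq_append_iff.mp huv
      exact .inl ⟨w₁, hL.plus_prefix_closed w₁ w₂ (mt List.map_eq_nil_iff.mpr hu)
        (mt List.map_eq_nil_iff.mpr hv) hw, rfl⟩
    · obtain ⟨a, u, rfl⟩ := List.exists_cons_of_ne_nil hu
      simp_all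
  · intro x
    induction x using WithOne.recOneCoe with
    | one => exact ⟨[b₀], .inr rfl, by simp [prodPlus, hb₀]⟩
    | coe s =>
      obtain ⟨w, ⟨hw, hws⟩, -⟩ := hL.unique_rep s
      exact ⟨w.map ι, .inl ⟨w, hw, rfl⟩, by simp [h.prodPlus_map, hws]⟩
  · rintro _ (⟨v₁, hv₁, rfl⟩ | rfl) _ (⟨v₂, hv₂, rfl⟩ | rfl) heq
    · rw [h.prodPlus_map, h.prodPlus_map] at heq
      rw [hL.injOn hv₁ hv₂ (Option.map_injective WithOne.coe_injective heq)]
    · exact absurd heq (prodPlus_map_ne hv₁)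
    · exact absurd heq.symm (prodPlus_map_ne hv₂)
    · rfl

theorem isRobustSgMarkovLang_extendLang (h : ExtendsByOne ψ ι φ) (b₀ : B) (hb₀ : ψ b₀ = 1)
    {L : Language C} (hL : IsRobustSgMarkovLang φ L) :
    IsRobustSgMarkovLang ψ (extendLang ι b₀ L) where
  toIsSgMarkovLang := h.isSgMarkovLang_extendLang b₀ hb₀ hL.toIsSgMarkovLang
  min_length := by
    rintro _ (⟨w, hw, rfl⟩ | rfl) u hu
    · obtain ⟨s, hs⟩ := exists_prodPlus_eq_some φ (hL.ne_nil hw)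
      rw [h.prodPlus_map, hs] at hu
      have hu' := (h.prodPlus_eq_some_coe_iff (ne_nil_of_prodPlus_eq_some hu)).mp hu
      calc (w.map ι).length = w.length := List.length_map _
        _ ≤ (u.filterMap (partialInv ι)).length := hL.min_length w hw _ (hu'.trans hs.symm)
        _ ≤ u.length := List.length_filterMap_le _ _
    · simp only [prodPlus, List.foldl_nil] at hu
      exact List.length_pos_iff.mpr (ne_nil_of_prodPlus_eq_some hu)

theorem exists_prodPlus_eq_some_of_extend (h : ExtendsByOne ψ ι φ) (b₀ : B)
    (hb₀ : ψ b₀ = 1) (hφ : ∀ s, ∃ v, prodPlus φ v = some s) (x : WithOne S) :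
    ∃ w, prodPlus ψ w = some x := by
  induction x using WithOne.recOneCoe with
  | one => exact ⟨[b₀], by simp [prodPlus, hb₀]⟩
  | coe s =>
    obtain ⟨v, hv⟩ := hφ s
    exact ⟨v.map ι, by simp [h.prodPlus_map, hv]⟩

theorem exists_prodPlus_eq_some_of_erase (h : ExtendsByOne ψ ι φ)
    (hψ : ∀ x, ∃ w, prodPlus ψ w = some x) (s : S) : ∃ v, prodPlus φ v = some s :=
  let ⟨_, hw⟩ := hψ s
  ⟨_, (h.prodPlus_eq_some_coe_iff (ne_nil_of_prodPlus_eq_some hw)).mp hw⟩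

end ExtendsByOne

end Erasure

section WithOne

variable {S : Type} [Semigroup S]

theorem sgMarkov_withOne_iff : SgMarkov (WithOne S) ↔ SgMarkov S := by
  constructor
  · rintro ⟨B, _, ψ, hψ, L, hL⟩
    have h := extendsByOne_subtypeVal ψ
    exact ⟨_, .ofFinite _, _, h.exists_prodPlus_eq_some_of_erase hψ, _,
      h.isSgMarkovLang_eraseLang hL⟩
  · rintro ⟨A, _, φ, hφ, L, hL⟩
    have h := extendsByOne_optionElim φ
    exact ⟨Option A, inferInstance, _, h.exists_prodPlus_eq_some_of_extend none rfl hφ, _,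
      h.isSgMarkovLang_extendLang none rfl hL⟩

theorem sgRobustlyMarkov_withOne_iff : SgRobustlyMarkov (WithOne S) ↔ SgRobustlyMarkov S := by
  constructor
  · rintro ⟨B, _, ψ, hψ, L, hL⟩
    have h := extendsByOne_subtypeVal ψ
    exact ⟨_, .ofFinite _, _, h.exists_prodPlus_eq_some_of_erase hψ, _,
      h.isRobustSgMarkovLang_eraseLang hL⟩
  · rintro ⟨A, _, φ, hφ, L, hL⟩
    have h := extendsByOne_optionElim φ
    exact ⟨Option A, inferInstance, _, h.exists_prodPlus_eq_some_of_extend none rfl hφ, _,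
      h.isRobustSgMarkovLang_extendLang none rfl hL⟩

theorem sgStronglyMarkov_withOne_iff : SgStronglyMarkov (WithOne S) ↔ SgStronglyMarkov S := by
  constructor
  · intro hS₁ A _ φ hφ
    have h := extendsByOne_optionElim φ
    obtain ⟨L, hL⟩ := hS₁ (Option A) _ (h.exists_prodPlus_eq_some_of_extend none rfl hφ)
    exact ⟨_, h.isRobustSgMarkovLang_eraseLang hL⟩
  · intro hS B _ ψ hψ
    have h := extendsByOne_subtypeVal ψ
    have := Fintype.ofFinite {b // ψ b ≠ 1}
    obtain ⟨L, hL⟩ := hS _ _ (h.exists_prodPlus_eq_some_of_erase hψ)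
    obtain ⟨w, hw⟩ := hψ 1
    obtain ⟨b₀, w, rfl⟩ := List.exists_cons_of_ne_nil (ne_nil_of_prodPlus_eq_some hw)
    exact ⟨_, h.isRobustSgMarkovLang_extendLang b₀ (eq_one_of_prodPlus_eq_some_one hw) hL⟩

end WithOne

/-- Adjoining an identity: `S` is Markov (resp. robustly Markov with respect to some
alphabet, strongly Markov) iff `S¹` is. -/
theorem stmt15 {S : Type} [Semigroup S] :
    (SgMarkov S ↔ SgMarkov (WithOne S)) ∧
    (SgRobustlyMarkov S ↔ SgRobustlyMarkov (WithOne S)) ∧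
    (SgStronglyMarkov S ↔ SgStronglyMarkov (WithOne S)) :=
  ⟨sgMarkov_withOne_iff.symm, sgRobustlyMarkov_withOne_iff.symm,
    sgStronglyMarkov_withOne_iff.symm⟩
end

section
/- If M and N are Markov monoids, then the direct product M × N is a Markov monoid. Moreover, if M and N are robustly Markov monoids (each admitting a robust monoid Markov language over some finite alphabet representing a generating set), then M × N is a robustly Markov monoid. -/
/-!
Given Markov languages `L₁ ⊆ A*` for `M` and `L₂ ⊆ B*` for `N`, the words `u v` over `A ⊕ B`
with `u ∈ L₁` and `v ∈ L₂` form a Markov language for `M × N`: the normal form of `(m, n)` is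
that of `m` followed by that of `n`. It is regular because it is the intersection of the
language of words with all letters of `A` before all letters of `B` with the preimages of `L₁`
and `L₂` under erasing the letters of the other alphabet. A word representing `(m, n)` contains a word over `A` representing `m` and one over
`B` representing `n`, so robustness of `L₁` and `L₂` passes to the product.
-/

open Function

theorem regularLang_iff_isRegular {A : Type} {L : Language A} : RegularLang L ↔ L.IsRegular :=
  Iff.rfl

namespace List

variable {A B : Type}

theorem length_filterMap_getLeft?_add_length_filterMap_getRight? (w : List (A ⊕ B)) :
    (w.filterMap Sum.getLeft?).length + (w.filterMap Sum.getRight?).length = w.length := by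
  induction w with
  | nil => rfl
  | cons c w ih => cases c <;> simp [filterMap_cons] <;> omega

theorem pairwise_map_inl_append_map_inr (u : List A) (v : List B) :
    (u.map Sum.inl ++ v.map Sum.inr).Pairwise (fun c d : A ⊕ B => c.isRight ≤ d.isRight) := by
  simp [pairwise_append, pairwise_map, pairwise_of_forall]

theorem eq_map_inl_append_map_inr_of_pairwise {w : List (A ⊕ B)}
    (h : w.Pairwise (fun c d : A ⊕ B => c.isRight ≤ d.isRight)) :
    w = (w.filterMap Sum.getLeft?).map Sum.inl ++ (w.filterMap Sum.getRight?).map Sum.inr := by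
  induction w with
  | nil => rfl
  | cons c w ih =>
    obtain ⟨hc, hw⟩ := pairwise_cons.1 h
    rcases c with a | b
    · simpa [filterMap_cons] using ih hw
    · have hleft : w.filterMap Sum.getLeft? = [] :=
        filterMap_eq_nil_iff.2 fun d hd => by
          rcases d with a | _
          · exact absurd (hc _ hd) (by simp)
          · rfl
      simpa [filterMap_cons, hleft] using ih hw

end List

namespace DFA

variable {α β σ : Type}

def comapFilterMap (f : β → Option α) (M : DFA α σ) : DFA β σ where
  step q b := (f b).elim q (M.step q)
  start := M.start
  accept := M.accept

theorem evalFrom_comapFilterMap (f : β → Option α) (M : DFA α σ) (q : σ) (w : List β) :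
    (M.comapFilterMap f).evalFrom q w = M.evalFrom q (w.filterMap f) := by
  induction w generalizing q with
  | nil => rfl
  | cons b w ih =>
    rw [evalFrom_cons, ih]
    cases hb : f b <;> simp [comapFilterMap, hb]

theorem accepts_comapFilterMap (f : β → Option α) (M : DFA α σ) :
    (M.comapFilterMap f).accepts = List.filterMap f ⁻¹' M.accepts := by
  ext w
  exact iff_of_eq (congrArg (· ∈ M.accept) (M.evalFrom_comapFilterMap f M.start w))

/-- The state `some x` records the last letter read (`none` at the start); `none` is a sink
entered on the first violation of `R`. -/
def isChain (R : α → α → Prop) [DecidableRel R] : DFA α (Option (Option α)) where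
  step
    | some x, a => if ∀ y ∈ x, R y a then some (some a) else none
    | none, _ => none
  start := some none
  accept := {s | s.isSome}

theorem evalFrom_isChain_none (R : α → α → Prop) [DecidableRel R] (w : List α) :
    (isChain R).evalFrom none w = none := by
  induction w with
  | nil => rfl
  | cons a w ih => exact ih

theorem evalFrom_isChain_mem_accept (R : α → α → Prop) [DecidableRel R] (x : Option α)
    (w : List α) : (isChain R).evalFrom (some x) w ∈ (isChain R).accept ↔
      (x.toList ++ w).IsChain R := by
  induction w generalizing x with
  | nil => cases x <;> simp [isChain]
  | cons a w ih =>
    by_cases hR : ∀ y ∈ x, R y a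
    · have hstep : (isChain R).step (some x) a = some (some a) := if_pos hR
      rw [evalFrom_cons, hstep, ih]
      cases x <;> simp_all
    · obtain ⟨y, rfl, hy⟩ : ∃ y, x = some y ∧ ¬R y a := by cases x <;> simp_all
      have hstep : (isChain R).step (some (some y)) a = none := if_neg hR
      rw [evalFrom_cons, hstep, evalFrom_isChain_none]
      simp [isChain, hy]

theorem accepts_isChain (R : α → α → Prop) [DecidableRel R] :
    (isChain R).accepts = {w | w.IsChain R} := by
  ext w
  exact evalFrom_isChain_mem_accept R none w

end DFA

namespace Language

variable {α β : Type}

theorem IsRegular.preimage_filterMap {L : Language α} (hL : L.IsRegular) (f : β → Option α) :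
    IsRegular (List.filterMap f ⁻¹' L) := by
  obtain ⟨σ, _, M, rfl⟩ := hL
  exact ⟨σ, inferInstance, M.comapFilterMap f, M.accepts_comapFilterMap f⟩

theorem isRegular_setOf_isChain [Fintype α] (R : α → α → Prop) [DecidableRel R] :
    IsRegular {w : List α | w.IsChain R} :=
  ⟨_, inferInstance, DFA.isChain R, DFA.accepts_isChain R⟩

theorem isRegular_setOf_pairwise_isRight_le {A B : Type} :
    IsRegular {w : List (A ⊕ B) | w.Pairwise (fun c d : A ⊕ B => c.isRight ≤ d.isRight)} := by
  have h : {w : List (A ⊕ B) | w.Pairwise (fun c d : A ⊕ B => c.isRight ≤ d.isRight)} =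
      List.filterMap (some ∘ Sum.isRight) ⁻¹' {l : List Bool | l.IsChain (· ≤ ·)} := by
    ext w
    simp [List.isChain_iff_pairwise, List.pairwise_map]
  rw [h]
  exact (isRegular_setOf_isChain _).preimage_filterMap _

end Language

section Product

variable {A B M N : Type} [Monoid M] [Monoid N]

def prodGen (φ : A → M) (ψ : B → N) : A ⊕ B → M × N :=
  Sum.elim (fun a => (φ a, 1)) (fun b => (1, ψ b))

theorem monProd_prodGen (φ : A → M) (ψ : B → N) (w : List (A ⊕ B)) :
    monProd (prodGen φ ψ) w =
      (monProd φ (w.filterMap Sum.getLeft?), monProd ψ (w.filterMap Sum.getRight?)) := by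
  induction w with
  | nil => rfl
  | cons c w ih =>
    simp only [monProd, List.map_cons, List.prod_cons] at ih ⊢
    rw [ih]
    cases c <;> simp [prodGen, List.filterMap_cons]

/-- The words `u.map inl ++ v.map inr` with `u ∈ L₁` and `v ∈ L₂`. -/
def prodLang (L₁ : Language A) (L₂ : Language B) : Language (A ⊕ B) :=
  {w | w.Pairwise (fun c d : A ⊕ B => c.isRight ≤ d.isRight) ∧
    w.filterMap Sum.getLeft? ∈ L₁ ∧ w.filterMap Sum.getRight? ∈ L₂}

variable {φ : A → M} {ψ : B → N} {L₁ : Language A} {L₂ : Language B}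

theorem map_inl_append_map_inr_mem_prodLang {u : List A} {v : List B} (hu : u ∈ L₁)
    (hv : v ∈ L₂) : u.map Sum.inl ++ v.map Sum.inr ∈ prodLang L₁ L₂ := by
  refine ⟨List.pairwise_map_inl_append_map_inr u v, ?_, ?_⟩ <;>
    simpa [List.filterMap_append, List.filterMap_map, Function.comp_def]

theorem IsMonMarkovLang.surjective (h : IsMonMarkovLang φ L₁) : Surjective (monProd φ) :=
  fun m => (h.unique_rep m).exists.imp fun _ => And.right

theorem IsMonMarkovLang.prod (h₁ : IsMonMarkovLang φ L₁) (h₂ : IsMonMarkovLang ψ L₂) :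
    IsMonMarkovLang (prodGen φ ψ) (prodLang L₁ L₂) where
  regular := regularLang_iff_isRegular.2 <| Language.isRegular_setOf_pairwise_isRight_le.inf <|
    (regularLang_iff_isRegular.1 h₁.regular |>.preimage_filterMap _).inf
      (regularLang_iff_isRegular.1 h₂.regular |>.preimage_filterMap _)
  prefix_closed u v := by
    rintro ⟨hsorted, hleft, hright⟩
    rw [List.filterMap_append] at hleft hright
    exact ⟨hsorted.sublist (List.sublist_append_left u v), h₁.prefix_closed _ _ hleft,
      h₂.prefix_closed _ _ hright⟩
  unique_rep := by
    rintro ⟨m, n⟩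
    obtain ⟨u, ⟨hu, rfl⟩, hu_unique⟩ := h₁.unique_rep m
    obtain ⟨v, ⟨hv, rfl⟩, hv_unique⟩ := h₂.unique_rep n
    refine ⟨u.map Sum.inl ++ v.map Sum.inr, ⟨map_inl_append_map_inr_mem_prodLang hu hv, ?_⟩, ?_⟩
    · simp [monProd_prodGen, List.filterMap_append, List.filterMap_map, Function.comp_def]
    · rintro w ⟨⟨hsorted, hleft, hright⟩, hw⟩
      rw [monProd_prodGen, Prod.mk.injEq] at hw
      rw [List.eq_map_inl_append_map_inr_of_pairwise hsorted, hu_unique _ ⟨hleft, hw.1⟩,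
        hv_unique _ ⟨hright, hw.2⟩]

theorem IsRobustMonMarkovLang.prod (h₁ : IsRobustMonMarkovLang φ L₁)
    (h₂ : IsRobustMonMarkovLang ψ L₂) :
    IsRobustMonMarkovLang (prodGen φ ψ) (prodLang L₁ L₂) where
  toIsMonMarkovLang := h₁.toIsMonMarkovLang.prod h₂.toIsMonMarkovLang
  min_length := by
    rintro w ⟨-, hleft, hright⟩ v hv
    rw [monProd_prodGen, monProd_prodGen, Prod.mk.injEq] at hv
    have := h₁.min_length _ hleft _ hv.1
    have := h₂.min_length _ hright _ hv.2
    have := w.length_filterMap_getLeft?_add_length_filterMap_getRight?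
    have := v.length_filterMap_getLeft?_add_length_filterMap_getRight?
    omega

end Product

theorem MonMarkov.prod {M N : Type} [Monoid M] [Monoid N] :
    MonMarkov M → MonMarkov N → MonMarkov (M × N) := by
  rintro ⟨A, _, φ, -, L₁, h₁⟩ ⟨B, _, ψ, -, L₂, h₂⟩
  exact ⟨A ⊕ B, inferInstance, _, (h₁.prod h₂).surjective, _, h₁.prod h₂⟩

theorem MonRobustlyMarkov.prod {M N : Type} [Monoid M] [Monoid N] :
    MonRobustlyMarkov M → MonRobustlyMarkov N → MonRobustlyMarkov (M × N) := by
  rintro ⟨A, _, φ, -, L₁, h₁⟩ ⟨B, _, ψ, -, L₂, h₂⟩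
  exact ⟨A ⊕ B, inferInstance, _, (h₁.prod h₂).surjective, _, h₁.prod h₂⟩

/-- The direct product of two Markov monoids is Markov, and the direct product of two
robustly Markov monoids is robustly Markov. -/
theorem stmt17 {M N : Type} [Monoid M] [Monoid N] :
    (MonMarkov M → MonMarkov N → MonMarkov (M × N)) ∧
    (MonRobustlyMarkov M → MonRobustlyMarkov N → MonRobustlyMarkov (M × N)) :=
  ⟨MonMarkov.prod, MonRobustlyMarkov.prod⟩
end
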